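/- For every k ∈ (k₀, 1) there exists u ∈ (π/2, π) such that sin u · √(1 − k² sin² u) + (F(u,k) − 2E(u,k)) · cos u = 0, where F(u,k) = ∫₀^{u} dt/√(1 − k² sin² t) and E(u,k) = ∫₀^{u} √(1 − k² sin² t) dt are the incomplete elliptic integrals of the first and second kind. -/

import Mathlib

/-!
At `u = π/2` the function equals `√(1 - k²) > 0`. At `u = π` the symmetry `sin (π - t) = sin t`
gives `F(π,k) = 2K(k)` and `E(π,k) = 2E(k)`, so it equals `2 (2E(k) - K(k))`. Since `E` decreases
and `K` increases strictly in `k`, `2E - K` is strictly decreasing on `[0,1)`, hence negative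
beyond its root `k₀`. The intermediate value theorem gives the root `u ∈ (π/2, π)`.
-/

open Real Set Filter Topology

/-- Complete elliptic integral of the first kind. -/
noncomputable def K (k : ℝ) : ℝ :=
  ∫ t in (0:ℝ)..(π/2), 1 / Real.sqrt (1 - k^2 * Real.sin t ^ 2)

/-- Complete elliptic integral of the second kind. -/
noncomputable def E (k : ℝ) : ℝ :=
  ∫ t in (0:ℝ)..(π/2), Real.sqrt (1 - k^2 * Real.sin t ^ 2)

/-- Incomplete elliptic integral of the first kind. -/
noncomputable def F' (u k : ℝ) : ℝ :=
  ∫ t in (0:ℝ)..u, 1 / Real.sqrt (1 - k^2 * Real.sin t ^ 2)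

/-- Incomplete elliptic integral of the second kind. -/
noncomputable def E' (u k : ℝ) : ℝ :=
  ∫ t in (0:ℝ)..u, Real.sqrt (1 - k^2 * Real.sin t ^ 2)

noncomputable def fz (k u : ℝ) : ℝ :=
  Real.sin u * Real.sqrt (1 - k^2 * Real.sin u ^ 2) + (F' u k - 2 * E' u k) * Real.cos u

section Integrands

variable {k : ℝ}

lemma one_sub_sq_mul_sin_sq_pos (hk : k ^ 2 < 1) (t : ℝ) : 0 < 1 - k ^ 2 * Real.sin t ^ 2 := by
  nlinarith [Real.sin_sq_le_one t, sq_nonneg k]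

lemma continuous_sqrt_one_sub_sq_mul_sin_sq (k : ℝ) :
    Continuous fun t => Real.sqrt (1 - k ^ 2 * Real.sin t ^ 2) := by
  fun_prop

lemma continuous_one_div_sqrt_one_sub_sq_mul_sin_sq (hk : k ^ 2 < 1) :
    Continuous fun t => 1 / Real.sqrt (1 - k ^ 2 * Real.sin t ^ 2) :=
  continuous_const.div (continuous_sqrt_one_sub_sq_mul_sin_sq k) fun t =>
    (Real.sqrt_pos.2 (one_sub_sq_mul_sin_sq_pos hk t)).ne'

end Integrands

lemma integral_pi_div_two_pi_comp_sin (f : ℝ → ℝ) :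
    ∫ t in (π/2)..π, f (Real.sin t) = ∫ t in (0:ℝ)..(π/2), f (Real.sin t) := by
  have h := intervalIntegral.integral_comp_sub_left (fun t => f (Real.sin t)) π
    (a := π/2) (b := π)
  simp only [Real.sin_pi_sub, sub_self] at h
  rw [h, show π - π / 2 = π / 2 by ring]

lemma integral_zero_pi_comp_sin {f : ℝ → ℝ} (hf : Continuous fun t => f (Real.sin t)) :
    ∫ t in (0:ℝ)..π, f (Real.sin t) = 2 * ∫ t in (0:ℝ)..(π/2), f (Real.sin t) := by
  rw [← intervalIntegral.integral_add_adjacent_intervals (hf.intervalIntegrable 0 (π/2))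
    (hf.intervalIntegrable (π/2) π), integral_pi_div_two_pi_comp_sin, two_mul]

lemma F'_pi {k : ℝ} (hk : k ^ 2 < 1) : F' π k = 2 * K k :=
  integral_zero_pi_comp_sin (f := fun s => 1 / Real.sqrt (1 - k ^ 2 * s ^ 2))
    (continuous_one_div_sqrt_one_sub_sq_mul_sin_sq hk)

lemma E'_pi (k : ℝ) : E' π k = 2 * E k :=
  integral_zero_pi_comp_sin (f := fun s => Real.sqrt (1 - k ^ 2 * s ^ 2))
    (continuous_sqrt_one_sub_sq_mul_sin_sq k)

lemma E_strictAntiOn : StrictAntiOn E (Icc 0 1) := by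
  rintro a ⟨ha, -⟩ b ⟨-, hb⟩ hab
  have hsq : a ^ 2 < b ^ 2 := by gcongr
  refine intervalIntegral.integral_lt_integral_of_continuousOn_of_le_of_exists_lt
    (by positivity) (continuous_sqrt_one_sub_sq_mul_sin_sq b).continuousOn
    (continuous_sqrt_one_sub_sq_mul_sin_sq a).continuousOn (fun t _ => ?_)
    ⟨π/2, ⟨by positivity, le_rfl⟩, ?_⟩
  · gcongr
  · rw [Real.sin_pi_div_two]
    exact Real.sqrt_lt_sqrt (by nlinarith) (by linarith)

lemma K_strictMonoOn : StrictMonoOn K (Ico 0 1) := by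
  rintro a ⟨ha, -⟩ b ⟨-, hb⟩ hab
  have hsq : a ^ 2 < b ^ 2 := by gcongr
  have hb1 : b ^ 2 < 1 := by nlinarith
  refine intervalIntegral.integral_lt_integral_of_continuousOn_of_le_of_exists_lt
    (by positivity) (continuous_one_div_sqrt_one_sub_sq_mul_sin_sq (hsq.trans hb1)).continuousOn
    (continuous_one_div_sqrt_one_sub_sq_mul_sin_sq hb1).continuousOn (fun t _ => ?_)
    ⟨π/2, ⟨by positivity, le_rfl⟩, ?_⟩
  · have := one_sub_sq_mul_sin_sq_pos hb1 t
    gcongr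
  · rw [Real.sin_pi_div_two]
    have := one_sub_sq_mul_sin_sq_pos hb1 (π/2)
    rw [Real.sin_pi_div_two] at this
    gcongr

lemma two_mul_E_sub_K_strictAntiOn : StrictAntiOn (fun k => 2 * E k - K k) (Ico 0 1) :=
  fun a ha b hb hab => by
    have := E_strictAntiOn (Ico_subset_Icc_self ha) (Ico_subset_Icc_self hb) hab
    have := K_strictMonoOn ha hb hab
    linarith

section fz

variable {k : ℝ}

lemma continuous_fz (hk : k ^ 2 < 1) : Continuous (fz k) := by
  have hF : Continuous fun u => F' u k := intervalIntegral.continuous_primitive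
    (fun _ _ => (continuous_one_div_sqrt_one_sub_sq_mul_sin_sq hk).intervalIntegrable _ _) 0
  have hE : Continuous fun u => E' u k := intervalIntegral.continuous_primitive
    (fun _ _ => (continuous_sqrt_one_sub_sq_mul_sin_sq k).intervalIntegrable _ _) 0
  unfold fz
  fun_prop

lemma fz_pi_div_two (k : ℝ) : fz k (π/2) = Real.sqrt (1 - k ^ 2) := by
  simp [fz]

lemma fz_pi (hk : k ^ 2 < 1) : fz k π = 2 * (2 * E k - K k) := by
  simp only [fz, Real.sin_pi, Real.cos_pi, F'_pi hk, E'_pi]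
  ring

end fz

/-- For every `k ∈ (k₀, 1)` there exists `u ∈ (π/2, π)` with
`sin u · √(1 − k² sin² u) + (F(u,k) − 2E(u,k)) · cos u = 0`. -/
theorem exists_root_fz (k₀ : ℝ) (hk₀ : k₀ ∈ Set.Ioo (0:ℝ) 1)
    (hroot : 2 * E k₀ - K k₀ = 0) :
    ∀ k ∈ Set.Ioo k₀ 1, ∃ u ∈ Set.Ioo (π/2) π,
      Real.sin u * Real.sqrt (1 - k^2 * Real.sin u ^ 2) +
        (F' u k - 2 * E' u k) * Real.cos u = 0 := by
  rintro k ⟨hk₀k, hk1⟩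
  have hk : k ^ 2 < 1 := by nlinarith [hk₀.1]
  have hneg : 2 * E k - K k < 0 :=
    hroot ▸ two_mul_E_sub_K_strictAntiOn ⟨hk₀.1.le, hk₀.2⟩ ⟨(hk₀.1.trans hk₀k).le, hk1⟩ hk₀k
  have hpi : fz k π < 0 := by rw [fz_pi hk]; linarith
  have hpi_div_two : 0 < fz k (π/2) := by rw [fz_pi_div_two]; exact Real.sqrt_pos.2 (by linarith)
  exact intermediate_value_Ioo' (by linarith [Real.pi_pos]) (continuous_fz hk).continuousOn
    ⟨hpi, hpi_div_two⟩
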